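/- The NOMA per-device energy function E(t) is convex on (0, ∞). -/

import Mathlib

/-!
Substituting `x = 1/t` turns `E` into `t ↦ C · t · G(1/t) + P^C · t` with `C ≥ 0`, where
`G(x) = Σ_l (e^{a_l x} − 1)(e^{a_j x} − 1) e^{b_{jl} x} + (e^{a_j x} − 1)`. On `x > 0` each factor
of a summand is nonnegative, nondecreasing and convex (all exponents are `≥ 0`), a class closed
under products, so `G` is convex; and the perspective `t ↦ t · G(1/t)` of a convex function on
`(0, ∞)` is again convex.
-/

open Set

theorem convexOn_finset_sum {𝕜 E β ι : Type*} [Semiring 𝕜] [PartialOrder 𝕜] [AddCommMonoid E]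
    [AddCommMonoid β] [PartialOrder β] [IsOrderedAddMonoid β] [SMul 𝕜 E] [Module 𝕜 β]
    {s : Set E} (hs : Convex 𝕜 s) (t : Finset ι) {f : ι → E → β}
    (hf : ∀ i ∈ t, ConvexOn 𝕜 s (f i)) :
    ConvexOn 𝕜 s (fun x => ∑ i ∈ t, f i x) := by
  induction t using Finset.cons_induction with
  | empty => simpa using convexOn_const 0 hs
  | cons i t _ ih =>
    simp only [Finset.sum_cons]
    exact (hf i (t.mem_cons_self i)).add (ih fun k hk => hf k (Finset.mem_cons_of_mem hk))

section LinearOrderedField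

variable {𝕜 : Type*} [Field 𝕜] [LinearOrder 𝕜] [IsStrictOrderedRing 𝕜]

theorem ConvexOn.perspective_Ioi {g : 𝕜 → 𝕜} (hg : ConvexOn 𝕜 (Ioi 0) g) :
    ConvexOn 𝕜 (Ioi 0) (fun t => t * g t⁻¹) := by
  refine ⟨convex_Ioi 0, fun x (hx : 0 < x) y (hy : 0 < y) α β hα hβ hαβ => ?_⟩
  simp only [smul_eq_mul]
  set s := α * x + β * y
  have hs : 0 < s := by
    rcases hα.eq_or_lt with rfl | _
    · simpa [s, show β = 1 by linarith] using hy
    · positivity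
  have hpoint : α * x / s * x⁻¹ + β * y / s * y⁻¹ = s⁻¹ := by
    field_simp
    linear_combination hαβ
  have hweights : α * x / s + β * y / s = 1 := by
    rw [← add_div, div_self hs.ne']
  have key := hg.2 (inv_pos.2 hx) (inv_pos.2 hy) (by positivity) (by positivity) hweights
  rw [smul_eq_mul, smul_eq_mul, smul_eq_mul, hpoint] at key
  calc s * g s⁻¹ ≤ s * (α * x / s * g x⁻¹ + β * y / s * g y⁻¹) :=
        mul_le_mul_of_nonneg_left key hs.le
    _ = α * (x * g x⁻¹) + β * (y * g y⁻¹) := by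
        field_simp [s]

structure IsMonotoneConvexNonnegOn (s : Set 𝕜) (f : 𝕜 → 𝕜) : Prop where
  convexOn : ConvexOn 𝕜 s f
  monotoneOn : MonotoneOn f s
  nonneg : ∀ x ∈ s, 0 ≤ f x

theorem IsMonotoneConvexNonnegOn.mul {s : Set 𝕜} {f g : 𝕜 → 𝕜}
    (hf : IsMonotoneConvexNonnegOn s f) (hg : IsMonotoneConvexNonnegOn s g) :
    IsMonotoneConvexNonnegOn s (f * g) where
  convexOn :=
    hf.convexOn.mul hg.convexOn hf.nonneg hg.nonneg (hf.monotoneOn.monovaryOn hg.monotoneOn)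
  monotoneOn := hf.monotoneOn.mul hg.monotoneOn hf.nonneg hg.nonneg
  nonneg x hx := mul_nonneg (hf.nonneg x hx) (hg.nonneg x hx)

end LinearOrderedField

open Real

theorem convexOn_exp_mul (c : ℝ) : ConvexOn ℝ univ (fun x => exp (c * x)) := by
  simpa [Function.comp_def] using convexOn_exp.comp_linearMap (LinearMap.mulLeft ℝ c)

theorem isMonotoneConvexNonnegOn_exp_mul {c : ℝ} (hc : 0 ≤ c) :
    IsMonotoneConvexNonnegOn (Ioi 0) (fun x => exp (c * x)) where
  convexOn := (convexOn_exp_mul c).subset (subset_univ _) (convex_Ioi 0)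
  monotoneOn _ _ _ _ hxy := exp_le_exp.2 (mul_le_mul_of_nonneg_left hxy hc)
  nonneg _ _ := (exp_pos _).le

theorem isMonotoneConvexNonnegOn_exp_mul_sub_one {c : ℝ} (hc : 0 ≤ c) :
    IsMonotoneConvexNonnegOn (Ioi 0) (fun x => exp (c * x) - 1) where
  convexOn := (isMonotoneConvexNonnegOn_exp_mul hc).convexOn.add_const (-1)
  monotoneOn _ hx _ hy hxy :=
    sub_le_sub_right ((isMonotoneConvexNonnegOn_exp_mul hc).monotoneOn hx hy hxy) 1
  nonneg x (hx : 0 < x) := sub_nonneg.2 (one_le_exp (mul_nonneg hc hx.le))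

theorem stmt_3_general (j J : ℕ)
    (D : ℕ → ℝ) (hD : ∀ l, j ≤ l → l ≤ J → 0 < D l)
    (B σ2 h η PC : ℝ) (hB : 0 < B) (hσ2 : 0 < σ2)
    (hη0 : 0 < η) (hPC : 0 ≤ PC)
    (a : ℕ → ℝ) (ha : ∀ l, a l = Real.log 2 * D l / B)
    (b : ℕ → ℝ) (hb : ∀ l, b l = Real.log 2 * (∑ s ∈ Finset.Ico (j + 1) l, D s) / B)
    (E : ℝ → ℝ)
    (hE : ∀ t : ℝ, E t =
      σ2 * t / (η * h ^ 2) *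
        ((∑ l ∈ Finset.Icc (j + 1) J,
            (Real.exp (a l / t) - 1) * (Real.exp (a j / t) - 1) * Real.exp (b l / t))
          + (Real.exp (a j / t) - 1)) + t * PC) :
    ConvexOn ℝ (Set.Ioi (0 : ℝ)) E := by
  have ha₀ : ∀ l, j ≤ l → l ≤ J → 0 ≤ a l := fun l hjl hlJ => by
    have := hD l hjl hlJ
    rw [ha]
    positivity
  have hb₀ : ∀ l ≤ J, 0 ≤ b l := fun l hlJ => by
    have : 0 ≤ ∑ s ∈ Finset.Ico (j + 1) l, D s := Finset.sum_nonneg fun s hs => by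
      rw [Finset.mem_Ico] at hs
      exact (hD s (by omega) (by omega)).le
    rw [hb]
    positivity
  set G : ℝ → ℝ := fun x => (∑ l ∈ Finset.Icc (j + 1) J,
      (exp (a l * x) - 1) * (exp (a j * x) - 1) * exp (b l * x)) + (exp (a j * x) - 1)
  have hG : ConvexOn ℝ (Ioi 0) G := by
    refine (convexOn_finset_sum (convex_Ioi 0) _ fun l hl => ?_).add
      (((convexOn_exp_mul (a j)).subset (subset_univ _) (convex_Ioi 0)).add_const (-1))
    rw [Finset.mem_Icc] at hl
    exact (((isMonotoneConvexNonnegOn_exp_mul_sub_one (ha₀ l (by omega) hl.2)).mul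
      (isMonotoneConvexNonnegOn_exp_mul_sub_one (ha₀ j le_rfl (by omega)))).mul
      (isMonotoneConvexNonnegOn_exp_mul (hb₀ l hl.2))).convexOn
  have hscale : 0 ≤ σ2 / (η * h ^ 2) := by positivity
  refine ((hG.perspective_Ioi.smul hscale).add
    ((convexOn_id (convex_Ioi 0)).smul hPC)).congr fun t _ => ?_
  simp only [hE, G, Pi.add_apply, smul_eq_mul, id, div_eq_mul_inv]
  ring

/-- The NOMA per-device energy function `E(t)` is convex on `(0, ∞)`.
Here `a l = (ln 2)·D l / B`, `b l = (ln 2)·(Σ_{s=j+1}^{l−1} D s)/B`, and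
`E(t) = (σ²·t/(η·h²))·[ Σ_{l=j+1}^{J} (e^{a_l/t} − 1)(e^{a_j/t} − 1)e^{b_{jl}/t}
        + (e^{a_j/t} − 1) ] + t·P^C`. -/
theorem stmt_3 (j J : ℕ) (hjJ : j ≤ J)
    (D : ℕ → ℝ) (hD : ∀ l, j ≤ l → l ≤ J → 0 < D l)
    (B σ2 h η PC : ℝ) (hB : 0 < B) (hσ2 : 0 < σ2) (hh : 0 < h)
    (hη0 : 0 < η) (hη1 : η ≤ 1) (hPC : 0 ≤ PC)
    (a : ℕ → ℝ) (ha : ∀ l, a l = Real.log 2 * D l / B)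
    (b : ℕ → ℝ) (hb : ∀ l, b l = Real.log 2 * (∑ s ∈ Finset.Ico (j + 1) l, D s) / B)
    (E : ℝ → ℝ)
    (hE : ∀ t : ℝ, E t =
      σ2 * t / (η * h ^ 2) *
        ((∑ l ∈ Finset.Icc (j + 1) J,
            (Real.exp (a l / t) - 1) * (Real.exp (a j / t) - 1) * Real.exp (b l / t))
          + (Real.exp (a j / t) - 1)) + t * PC) :
    ConvexOn ℝ (Set.Ioi (0 : ℝ)) E :=
  stmt_3_general j J D hD B σ2 h η PC hB hσ2 hη0 hPC a ha b hb E hE
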